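/- If p is a homogeneous degree-n polynomial in the entries of an n×n matrix Y over an infinite field such that p(A·Y·B) = p(Y) for all A, B with det(A)·det(B) = 1, then p is a scalar multiple of det. -/
import Mathlib

open MvPolynomial Polynomial Matrix

lemma eval_smul_of_isHomogeneous {σ K : Type*} [CommSemiring K] {p : MvPolynomial σ K} {n : ℕ}
    (hp : p.IsHomogeneous n) (c : K) (x : σ → K) :
    MvPolynomial.eval (fun i => c * x i) p = c ^ n * MvPolynomial.eval x p := by
  rw [MvPolynomial.eval_eq, MvPolynomial.eval_eq, Finset.mul_sum]
  apply Finset.sum_congr rfl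
  intro d hd
  have hdeg : ∑ i ∈ d.support, d i = n := by
    have h := hp (MvPolynomial.mem_support_iff.mp hd)
    simpa [Finsupp.weight_apply, Finsupp.sum] using h
  rw [← hdeg]
  simp_rw [mul_pow]
  rw [Finset.prod_mul_distrib, Finset.prod_pow_eq_pow_sum]
  ring

lemma eval_aeval_poly {σ K : Type*} [CommSemiring K] (g : σ → Polynomial K)
    (p : MvPolynomial σ K) (v : K) :
    Polynomial.eval v (MvPolynomial.aeval g p) =
      MvPolynomial.eval (fun i => Polynomial.eval v (g i)) p := by
  induction p using MvPolynomial.induction_on with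
  | C a => simp
  | add f h hf hh => simp [hf, hh]
  | mul_X f i hf => simp [hf]

/-- The determinant is characterized by its symmetries: a homogeneous degree-n
polynomial in the entries of an n×n matrix over an infinite field that is
invariant under Y ↦ A·Y·B for all A, B with det(A)·det(B) = 1 is a scalar
multiple of the determinant. -/
theorem det_characterized_by_symmetries {n : ℕ} {K : Type*} [Field K] [Infinite K]
    (p : MvPolynomial (Fin n × Fin n) K) (hp : p.IsHomogeneous n)
    (hinv : ∀ A B : Matrix (Fin n) (Fin n) K, A.det * B.det = 1 →
      ∀ Y : Matrix (Fin n) (Fin n) K,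
        MvPolynomial.eval (fun q : Fin n × Fin n => (A * Y * B) q.1 q.2) p =
          MvPolynomial.eval (fun q : Fin n × Fin n => Y q.1 q.2) p) :
    ∃ c : K, ∀ Y : Matrix (Fin n) (Fin n) K,
      MvPolynomial.eval (fun q : Fin n × Fin n => Y q.1 q.2) p = c * Y.det := by
  rcases Nat.eq_zero_or_pos n with hn | hn
  · subst hn
    refine ⟨MvPolynomial.eval (fun _ => 0) p, fun Y => ?_⟩
    rw [Matrix.det_fin_zero, mul_one]
    have hfun : (fun q : Fin 0 × Fin 0 => Y q.1 q.2) = fun _ => (0 : K) :=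
      funext fun q => q.1.elim0
    rw [hfun]
  have : NeZero n := ⟨hn.ne'⟩
  set E : Matrix (Fin n) (Fin n) K → K :=
    fun Y => MvPolynomial.eval (fun q : Fin n × Fin n => Y q.1 q.2) p with hE
  set c : K := E 1 with hc
  set D : K → Matrix (Fin n) (Fin n) K :=
    fun d => Matrix.diagonal (fun i => if i = 0 then d else 1) with hD
  have hdetD : ∀ d : K, (D d).det = d := by
    intro d
    simp [hD, Matrix.det_diagonal, Finset.prod_ite_eq']
  have hprodD : ∀ a t : K, (∏ i : Fin n, (if i = (0:Fin n) then a else t)) = a * t ^ (n-1) := by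
    intro a t
    rw [← Finset.mul_prod_erase Finset.univ _ (Finset.mem_univ (0 : Fin n))]
    simp only [if_pos rfl]
    congr 1
    rw [Finset.prod_eq_pow_card (b := t), Finset.card_erase_of_mem (Finset.mem_univ _),
      Finset.card_univ, Fintype.card_fin]
    intro x hx
    rw [if_neg]
    exact (Finset.mem_erase.mp hx).1
  -- value on scalar matrices / the special diagonal matrix
  have hDI : ∀ t : K, t ≠ 0 → E (D (t ^ n)) = t ^ n * c := by
    intro t ht
    set A : Matrix (Fin n) (Fin n) K :=
      Matrix.diagonal (fun i => if i = 0 then t * (t ^ n)⁻¹ else t) with hA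
    have htn : (t : K) ^ n ≠ 0 := pow_ne_zero _ ht
    have hpow : t * t ^ (n - 1) = t ^ n := by
      rw [← pow_succ']
      congr 1
      omega
    have hdetA : A.det = 1 := by
      rw [hA, Matrix.det_diagonal, hprodD]
      field_simp
      exact hpow
    have hf : (fun i : Fin n => (if i = (0:Fin n) then t * (t ^ n)⁻¹ else t) *
        (if i = (0:Fin n) then t ^ n else 1)) = fun _ => t := by
      funext i
      by_cases hi : i = 0
      · rw [if_pos hi, if_pos hi, mul_assoc, inv_mul_cancel₀ htn, mul_one]
      · rw [if_neg hi, if_neg hi, mul_one]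
    have hAD : A * D (t ^ n) * 1 = Matrix.diagonal (fun _ => t) := by
      rw [mul_one, hD, hA, Matrix.diagonal_mul_diagonal, hf]
    have h1 := hinv A 1 (by rw [hdetA, Matrix.det_one, mul_one]) (D (t ^ n))
    rw [hAD] at h1
    have hdiag : (fun q : Fin n × Fin n => Matrix.diagonal (fun _ => t) q.1 q.2)
        = fun q : Fin n × Fin n => t * (1 : Matrix (Fin n) (Fin n) K) q.1 q.2 := by
      funext q
      by_cases h : q.1 = q.2 <;> simp [Matrix.diagonal_apply, Matrix.one_apply, h]
    calc E (D (t ^ n)) = E (Matrix.diagonal (fun _ => t)) := h1.symm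
      _ = t ^ n * c := by
          show MvPolynomial.eval
            (fun q : Fin n × Fin n => Matrix.diagonal (fun _ => t) q.1 q.2) p = _
          rw [hdiag, eval_smul_of_isHomogeneous hp]
  -- the univariate polynomial d ↦ E (D d)
  set g : Fin n × Fin n → Polynomial K :=
    fun ij => if ij.1 = ij.2 then (if ij.1 = 0 then Polynomial.X else 1) else 0 with hg
  set q : Polynomial K := MvPolynomial.aeval g p with hqdef
  have hq : ∀ d : K, Polynomial.eval d q = E (D d) := by
    intro d
    rw [hqdef, eval_aeval_poly]
    have hfun : (fun i : Fin n × Fin n => Polynomial.eval d (g i))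
        = fun ij : Fin n × Fin n => D d ij.1 ij.2 := by
      funext ij
      obtain ⟨i, j⟩ := ij
      simp only [hg, hD]
      by_cases h : i = j
      · subst h
        by_cases h0 : i = 0 <;> simp [Matrix.diagonal_apply_eq, h0]
      · simp [Matrix.diagonal_apply_ne _ h, h]
    rw [hfun]
  -- q = C c * X
  have hqX : q = Polynomial.C c * Polynomial.X := by
    have hroots : ∀ t : K, t ≠ 0 →
        (q - Polynomial.C c * Polynomial.X).IsRoot (t ^ n) := by
      intro t ht
      simp only [Polynomial.IsRoot, Polynomial.eval_sub, Polynomial.eval_mul,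
        Polynomial.eval_C, Polynomial.eval_X, hq, hDI t ht]
      ring
    have hS : Set.Infinite ((fun t : K => t ^ n) '' {t | t ≠ 0}) := by
      intro hfin
      have hsub : {t : K | t ≠ 0} ⊆
          ⋃ y ∈ ((fun t : K => t ^ n) '' {t | t ≠ 0}),
            {t : K | (Polynomial.X ^ n - Polynomial.C y).IsRoot t} := by
        intro t ht
        refine Set.mem_biUnion (Set.mem_image_of_mem _ ht) ?_
        simp [Polynomial.IsRoot]
      have hfin2 : Set.Finite {t : K | t ≠ 0} := by
        refine Set.Finite.subset (Set.Finite.biUnion hfin ?_) hsub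
        intro y _
        apply Polynomial.finite_setOf_isRoot
        intro h0
        have h1 := congrArg (fun r => Polynomial.coeff r n) h0
        simp [Polynomial.coeff_X_pow, Polynomial.coeff_C, hn.ne'] at h1
      have h0c : {t : K | t ≠ 0} = ({0} : Set K)ᶜ := by
        ext t; simp
      rw [h0c] at hfin2
      exact (Set.finite_singleton (0 : K)).infinite_compl hfin2
    have hz : q - Polynomial.C c * Polynomial.X = 0 := by
      apply Polynomial.eq_zero_of_infinite_isRoot
      apply hS.mono
      rintro x ⟨t, ht, rfl⟩
      exact hroots t ht
    exact sub_eq_zero.mp hz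
  have hDd : ∀ d : K, E (D d) = c * d := by
    intro d
    rw [← hq, hqX]
    simp
  -- invertible matrices
  have hinvY : ∀ Y : Matrix (Fin n) (Fin n) K, Y.det ≠ 0 → E Y = c * Y.det := by
    intro Y hY
    have hDdet : IsUnit (D Y.det).det := by
      rw [hdetD]; exact isUnit_iff_ne_zero.mpr hY
    have hcond : (Y * (D Y.det)⁻¹).det * (1 : Matrix (Fin n) (Fin n) K).det = 1 := by
      rw [Matrix.det_one, mul_one, Matrix.det_mul, Matrix.det_nonsing_inv, hdetD,
        Ring.inverse_eq_inv, mul_inv_cancel₀ hY]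
    have h1 := hinv (Y * (D Y.det)⁻¹) 1 hcond (D Y.det)
    have hback : Y * (D Y.det)⁻¹ * D Y.det * 1 = Y := by
      rw [mul_one, mul_assoc, Matrix.nonsing_inv_mul _ hDdet, mul_one]
    rw [hback] at h1
    calc E Y = E (D Y.det) := h1
      _ = c * Y.det := hDd _
  -- determinant as a polynomial
  set dp : MvPolynomial (Fin n × Fin n) K :=
    (Matrix.of fun i j : Fin n => (MvPolynomial.X (i, j) : MvPolynomial (Fin n × Fin n) K)).det
    with hdpdef
  have hdp : ∀ x : (Fin n × Fin n) → K,
      MvPolynomial.eval x dp = (Matrix.of fun i j : Fin n => x (i, j)).det := by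
    intro x
    rw [hdpdef, RingHom.map_det]
    congr 1
    ext i j
    simp [Matrix.map_apply]
  have hdpne : dp ≠ 0 := by
    intro h
    have h2 := hdp (fun ij => (1 : Matrix (Fin n) (Fin n) K) ij.1 ij.2)
    rw [h, map_zero] at h2
    have h3 : (Matrix.of fun i j : Fin n => (1 : Matrix (Fin n) (Fin n) K) i j)
        = (1 : Matrix (Fin n) (Fin n) K) := rfl
    rw [h3, Matrix.det_one] at h2
    exact one_ne_zero h2.symm
  have hmain : dp * (p - MvPolynomial.C c * dp) = 0 := by
    apply MvPolynomial.funext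
    intro x
    rw [_root_.map_mul, _root_.map_sub, _root_.map_mul, MvPolynomial.eval_C, hdp, map_zero]
    set Y : Matrix (Fin n) (Fin n) K := Matrix.of fun i j : Fin n => x (i, j) with hY
    have hx : (fun q : Fin n × Fin n => Y q.1 q.2) = x := rfl
    by_cases hdet : Y.det = 0
    · rw [hdet, zero_mul]
    · have h4 : MvPolynomial.eval x p = c * Y.det := by
        rw [← hx]
        exact hinvY Y hdet
      rw [h4]
      ring
  rcases mul_eq_zero.mp hmain with h | h
  · exact absurd h hdpne
  · refine ⟨c, fun Y => ?_⟩
    have hpc : p = MvPolynomial.C c * dp := sub_eq_zero.mp h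
    rw [hpc, _root_.map_mul, MvPolynomial.eval_C, hdp]
    rfl
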